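/- Let X be a finite rack with homogeneous orbits, G an abelian group, g : X → G a function, a ∈ X, and w ∈ F(X). Then ∑_{y∈X} g(a^y) = ∑_{y∈X} g(a^{w·y}), i.e. the sum is unchanged if a is first acted on by w. -/

import Mathlib

/-- A rack: a set with a binary operation `act a b = a^b` such that each
`fun a => a^b` is a bijection and the rack identity `(a^b)^c = (a^c)^(b^c)` holds. -/
structure RackStr (X : Type) where
  act : X → X → X
  bij : ∀ b, Function.Bijective fun a => act a b
  distrib : ∀ a b c, act (act a b) c = act (act a c) (act b c)

namespace RackStr
variable {X : Type}

/-- Two elements are in the same orbit iff they are related by the equivalence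
relation generated by `a ↦ a^c`. -/
def orbRel (R : RackStr X) : X → X → Prop :=
  Relation.EqvGen fun a b => ∃ c, R.act a c = b

/-- `N a b` is the number of `c` with `a^c = b`. -/
noncomputable def N (R : RackStr X) (a b : X) : ℕ :=
  Nat.card {c : X // R.act a c = b}

/-- A rack has homogeneous orbits if `N a b` depends only on the common orbit
of `a` and `b`. -/
def Homog (R : RackStr X) : Prop :=
  ∀ a b a' b', R.orbRel a b → R.orbRel b a' → R.orbRel a' b' → R.N a b = R.N a' b'

/-- The permutation `f_b : a ↦ a^b`. -/
noncomputable def perm (R : RackStr X) (b : X) : Equiv.Perm X :=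
  Equiv.ofBijective (fun a => R.act a b) (R.bij b)

/-- The action of the free group on `X` extending `b ↦ f_b`. -/
noncomputable def wact (R : RackStr X) : FreeGroup X →* Equiv.Perm X :=
  FreeGroup.lift R.perm

end RackStr

/-! Grouping the terms by the value of `a^y` gives `∑ y, g (a^y) = ∑ b, N(a,b) • g b`. The action
of `w` keeps `a` inside its orbit, and by homogeneity `N(a,b)` only depends on the orbit of `a`
(when `b` lies in another orbit it vanishes). -/

open Finset

namespace RackStr
variable {X : Type} (R : RackStr X)

lemma orbRel_equivalence : Equivalence R.orbRel := Relation.EqvGen.is_equivalence _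

lemma orbRel_act (a c : X) : R.orbRel a (R.act a c) :=
  Relation.EqvGen.rel _ _ ⟨c, rfl⟩

lemma N_eq_zero_of_not_orbRel {a b : X} (h : ¬ R.orbRel a b) : R.N a b = 0 :=
  Nat.card_eq_zero.mpr (.inl ⟨fun c => h (c.2 ▸ R.orbRel_act a c)⟩)

lemma Homog.N_eq_of_orbRel {R : RackStr X} (hh : R.Homog) {a a' : X} (h : R.orbRel a a')
    (b : X) : R.N a b = R.N a' b := by
  have e := R.orbRel_equivalence
  by_cases hb : R.orbRel a b
  · exact hh a b a' b hb (e.trans (e.symm hb) h) (e.trans (e.symm h) hb)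
  · rw [R.N_eq_zero_of_not_orbRel hb, R.N_eq_zero_of_not_orbRel fun h' => hb (e.trans h h')]

lemma sum_act_eq_sum_N_smul [Fintype X] {M : Type*} [AddCommMonoid M] (g : X → M) (a : X) :
    ∑ y, g (R.act a y) = ∑ b, R.N a b • g b := by
  classical
  rw [← sum_fiberwise' univ (R.act a) g]
  refine sum_congr rfl fun b _ => ?_
  rw [sum_const, N, Nat.card_eq_fintype_card, Fintype.card_subtype]

lemma wact_of (x : X) : R.wact (FreeGroup.of x) = R.perm x :=
  FreeGroup.lift_apply_of

lemma orbRel_wact (w : FreeGroup X) (a : X) : R.orbRel a (R.wact w a) := by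
  have e := R.orbRel_equivalence
  induction w using FreeGroup.induction_on generalizing a with
  | C1 => exact e.refl a
  | of x => exact R.orbRel_act a x
  | inv_of x _ =>
    have h : R.act (R.wact (FreeGroup.of x)⁻¹ a) x = a := by
      rw [map_inv, wact_of]
      exact (R.perm x).apply_symm_apply a
    have h' := R.orbRel_act (R.wact (FreeGroup.of x)⁻¹ a) x
    rw [h] at h'
    exact e.symm h'
  | mul v u hv hu =>
    rw [map_mul, Equiv.Perm.mul_apply]
    exact e.trans (hu a) (hv (R.wact u a))

end RackStr

theorem stmt5 {X : Type} [Fintype X] (R : RackStr X) (hh : R.Homog)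
    {G : Type} [AddCommGroup G] (g : X → G) (a : X) (w : FreeGroup X) :
    ∑ y : X, g (R.act a y) = ∑ y : X, g (R.act (R.wact w a) y) := by
  rw [R.sum_act_eq_sum_N_smul g a, R.sum_act_eq_sum_N_smul g (R.wact w a)]
  exact sum_congr rfl fun b _ => by rw [hh.N_eq_of_orbRel (R.orbRel_wact w a) b]
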